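/- arXiv:2001.00435 — 2 statements merged into one kernel-verified Lean document; each statement's English description precedes it below -/
import Mathlib

section
/- For matrices A ∈ ℂ^{n×n} and B ∈ ℂ^{r×r}, the spectrum of Y = A ⊗ I_r + I_n ⊗ B is exactly {λ_A + λ_B : λ_A ∈ spectrum(A), λ_B ∈ spectrum(B)}. -/
/-!
Reshaping an eigenvector of `A ⊗ I + I ⊗ B` into a matrix `X` turns the eigenvalue equation into
the Sylvester equation `B X + X Aᵀ = z X`. Outer products `w vᵀ` of eigenvectors of `B` and `A`
solve it with `z = b + a`. Conversely, a nonzero solution intertwines `B` with `D = z - Aᵀ`, so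
`p(B) X = X p(D)` for every polynomial `p`; for `p` the characteristic polynomial of `D` this makes
`p(B)` singular, and the spectral mapping theorem yields a common eigenvalue `b = z - a` of `B`
and `D`, with `a` an eigenvalue of `Aᵀ`, hence of `A`.
-/

open Matrix Kronecker

open Polynomial

namespace Matrix

variable {K : Type*} [Field K] {m k : Type*} [Fintype m] [DecidableEq m] [Fintype k] [DecidableEq k]

theorem mem_spectrum_iff_exists_mulVec_eq_smul {M : Matrix m m K} {μ : K} :
    μ ∈ spectrum K M ↔ ∃ v ≠ 0, M *ᵥ v = μ • v := by
  rw [← spectrum_toLin', ← Module.End.hasEigenvalue_iff_mem_spectrum]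
  constructor
  · intro h
    obtain ⟨v, hv⟩ := h.exists_hasEigenvector
    exact ⟨v, hv.2, by simpa using hv.apply_eq_smul⟩
  · rintro ⟨v, hv, hMv⟩
    exact Module.End.hasEigenvalue_of_hasEigenvector ⟨by simpa using hMv, hv⟩

theorem spectrum_transpose (M : Matrix m m K) : spectrum K Mᵀ = spectrum K M := by
  ext μ
  simp only [mem_spectrum_iff_isRoot_charpoly, charpoly_transpose]

theorem aeval_mul_eq_mul_aeval {R : Type*} [CommRing R] {X : Matrix m m R} {D : Matrix k k R}
    {V : Matrix m k R} (h : X * V = V * D) (p : R[X]) : aeval X p * V = V * aeval D p := by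
  induction p using Polynomial.induction_on' with
  | add p q hp hq => simp only [map_add, Matrix.add_mul, Matrix.mul_add, hp, hq]
  | monomial j a =>
    have hpow : X ^ j * V = V * D ^ j := by
      induction j with
      | zero => simp
      | succ j ih => rw [pow_succ, pow_succ, Matrix.mul_assoc, h, ← Matrix.mul_assoc, ih,
          Matrix.mul_assoc]
    simp only [aeval_monomial, Algebra.algebraMap_eq_smul_one, Matrix.smul_mul, Matrix.mul_smul,
      Matrix.one_mul, hpow]

theorem exists_mem_spectrum_of_mul_eq_mul [IsAlgClosed K] {X : Matrix m m K} {D : Matrix k k K}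
    {V : Matrix m k K} (hV : V ≠ 0) (h : X * V = V * D) :
    ∃ μ ∈ spectrum K X, μ ∈ spectrum K D := by
  rcases isEmpty_or_nonempty k with _ | _
  · exact absurd (Subsingleton.elim V 0) hV
  have hdeg : 0 < degree D.charpoly := by
    rw [charpoly_degree_eq_dim]
    exact_mod_cast Fintype.card_pos
  have hzero : (0 : K) ∈ spectrum K (aeval X D.charpoly) := by
    rw [spectrum.zero_mem_iff]
    intro hu
    have hchar := aeval_mul_eq_mul_aeval h D.charpoly
    rw [aeval_self_charpoly, Matrix.mul_zero] at hchar
    apply hV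
    calc V = (aeval X D.charpoly)⁻¹ * aeval X D.charpoly * V := by
          rw [nonsing_inv_mul _ ((isUnit_iff_isUnit_det _).mp hu), Matrix.one_mul]
      _ = 0 := by rw [Matrix.mul_assoc, hchar, Matrix.mul_zero]
  rw [spectrum.map_polynomial_aeval_of_degree_pos X _ hdeg] at hzero
  obtain ⟨μ, hμX, hμD⟩ := hzero
  exact ⟨μ, hμX, mem_spectrum_iff_isRoot_charpoly.mpr hμD⟩

def kroneckerSum {R : Type*} [Semiring R] (A : Matrix m m R) (B : Matrix k k R) :
    Matrix (m × k) (m × k) R :=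
  A ⊗ₖ 1 + 1 ⊗ₖ B

theorem kroneckerSum_mulVec_vec {R : Type*} [CommSemiring R] (A : Matrix m m R)
    (B : Matrix k k R) (X : Matrix k m R) :
    kroneckerSum A B *ᵥ vec X = vec (B * X + X * Aᵀ) := by
  rw [kroneckerSum, add_mulVec, kronecker_mulVec_vec, kronecker_mulVec_vec, transpose_one,
    Matrix.one_mul, Matrix.mul_one, vec_add, add_comm]

theorem mem_spectrum_kroneckerSum_iff {A : Matrix m m K} {B : Matrix k k K} {z : K} :
    z ∈ spectrum K (kroneckerSum A B) ↔ ∃ X : Matrix k m K, X ≠ 0 ∧ B * X + X * Aᵀ = z • X := by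
  rw [mem_spectrum_iff_exists_mulVec_eq_smul, vec_bijective.surjective.exists]
  simp only [ne_eq, vec_eq_zero_iff, kroneckerSum_mulVec_vec, ← vec_smul, vec_inj]

theorem add_mem_spectrum_kroneckerSum {A : Matrix m m K} {B : Matrix k k K} {a b : K}
    (ha : a ∈ spectrum K A) (hb : b ∈ spectrum K B) : a + b ∈ spectrum K (kroneckerSum A B) := by
  obtain ⟨v, hv, hAv⟩ := mem_spectrum_iff_exists_mulVec_eq_smul.mp ha
  obtain ⟨w, hw, hBw⟩ := mem_spectrum_iff_exists_mulVec_eq_smul.mp hb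
  obtain ⟨i, hwi⟩ := Function.ne_iff.mp hw
  obtain ⟨j, hvj⟩ := Function.ne_iff.mp hv
  refine mem_spectrum_kroneckerSum_iff.mpr
    ⟨vecMulVec w v, fun h => mul_ne_zero hwi hvj congr($h i j), ?_⟩
  rw [mul_vecMulVec, vecMulVec_mul, vecMul_transpose, hAv, hBw, smul_vecMulVec, vecMulVec_smul,
    add_smul, add_comm]

theorem exists_add_eq_of_mem_spectrum_kroneckerSum [IsAlgClosed K] {A : Matrix m m K}
    {B : Matrix k k K} {z : K} (hz : z ∈ spectrum K (kroneckerSum A B)) :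
    ∃ a ∈ spectrum K A, ∃ b ∈ spectrum K B, z = a + b := by
  obtain ⟨X, hX, hsyl⟩ := mem_spectrum_kroneckerSum_iff.mp hz
  have hBX : B * X = X * (algebraMap K _ z - Aᵀ) := by
    rw [Matrix.mul_sub, Algebra.algebraMap_eq_smul_one, Matrix.mul_smul, Matrix.mul_one, ← hsyl,
      add_sub_cancel_right]
  obtain ⟨b, hb, hbz⟩ := exists_mem_spectrum_of_mul_eq_mul hX hBX
  rw [← spectrum.singleton_sub_eq, spectrum_transpose, Set.singleton_sub] at hbz
  obtain ⟨a, ha, rfl⟩ := hbz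
  exact ⟨a, ha, z - a, hb, by ring⟩

end Matrix

/-- Kronecker sum spectrum: the spectrum of `A ⊗ I_r + I_n ⊗ B` is exactly
the set of sums of an eigenvalue of `A` and an eigenvalue of `B`. -/
theorem stmt_0 (n r : ℕ) (A : Matrix (Fin n) (Fin n) ℂ) (B : Matrix (Fin r) (Fin r) ℂ) :
    spectrum ℂ (A ⊗ₖ (1 : Matrix (Fin r) (Fin r) ℂ) + (1 : Matrix (Fin n) (Fin n) ℂ) ⊗ₖ B)
      = {z : ℂ | ∃ a ∈ spectrum ℂ A, ∃ b ∈ spectrum ℂ B, z = a + b} := by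
  refine Set.Subset.antisymm (fun z => exists_add_eq_of_mem_spectrum_kroneckerSum) ?_
  rintro _ ⟨a, ha, b, hb, rfl⟩
  exact add_mem_spectrum_kroneckerSum ha hb
end

section
/- Let A ∈ ℝ^{n×n}, γ ∈ ℝ with P symmetric positive definite solving AᵀP + PA − 2γP = −I_n, and set γ̃ = −1/λ_max(P) + 2γ. Then every solution x(t) of ẋ = Ax satisfies x(t)ᵀP x(t) ≤ e^{γ̃(t−t₀)} x(t₀)ᵀP x(t₀) for all t ≥ t₀. -/
/-! Along a trajectory, `V = xᵀPx` has derivative `xᵀ(AᵀP + PA)x = -‖x‖² + 2γV`.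
Expanding in an orthonormal eigenbasis of `P` gives the Rayleigh bound `V ≤ λ_max(P) ‖x‖²`,
so `V' ≤ γ̃ V`, and Grönwall's inequality integrates this differential inequality. -/

open Matrix Set

section

variable {ι : Type*} [Fintype ι] [DecidableEq ι]

theorem Matrix.IsHermitian.inner_toEuclideanLin_self_le
    {P : Matrix ι ι ℝ} (hP : P.IsHermitian) (v : EuclideanSpace ℝ ι) :
    inner ℝ v (toEuclideanLin P v) ≤ (⨆ i, hP.eigenvalues i) * ‖v‖ ^ 2 := by
  set b := hP.eigenvectorBasis
  have hPb (i : ι) : toEuclideanLin P (b i) = hP.eigenvalues i • b i := by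
    ext j
    simpa using congrFun (hP.mulVec_eigenvectorBasis i) j
  have hquad :
      inner ℝ v (toEuclideanLin P v) = ∑ i, hP.eigenvalues i * inner ℝ v (b i) ^ 2 := by
    rw [← b.sum_inner_mul_inner]
    refine Finset.sum_congr rfl fun i _ => ?_
    rw [← isSymmetric_toEuclideanLin_iff.2 hP, hPb, real_inner_smul_left, real_inner_comm v]
    ring
  have hnorm : ‖v‖ ^ 2 = ∑ i, inner ℝ v (b i) ^ 2 := by
    rw [← real_inner_self_eq_norm_sq, ← b.sum_inner_mul_inner]
    simp_rw [real_inner_comm v, sq]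
  rw [hquad, hnorm, Finset.mul_sum]
  gcongr with i
  exact le_ciSup (finite_range _).bddAbove i

theorem Matrix.PosDef.inner_toEuclideanLin_self_div_le
    {P : Matrix ι ι ℝ} (hP : P.PosDef) (v : EuclideanSpace ℝ ι) :
    inner ℝ v (toEuclideanLin P v) / (⨆ i, hP.1.eigenvalues i) ≤ ‖v‖ ^ 2 := by
  -- the empty supremum is the junk value `0`, but then `v = 0`
  rcases isEmpty_or_nonempty ι with _ | ⟨⟨i⟩⟩
  · simp [Subsingleton.elim v 0]
  · have hmax : 0 < ⨆ i, hP.1.eigenvalues i :=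
      (hP.eigenvalues_pos i).trans_le (le_ciSup (finite_range _).bddAbove i)
    rw [div_le_iff₀' hmax]
    exact hP.1.inner_toEuclideanLin_self_le v

theorem Matrix.inner_toEuclideanLin_mul_add
    (A P : Matrix ι ι ℝ) (v : EuclideanSpace ℝ ι) :
    inner ℝ v (toEuclideanLin P (toEuclideanLin A v))
        + inner ℝ (toEuclideanLin A v) (toEuclideanLin P v)
      = inner ℝ v (toEuclideanLin (Aᵀ * P + P * A) v) := by
  have hadj : inner ℝ (toEuclideanLin A v) (toEuclideanLin P v)
      = inner ℝ v (toEuclideanLin Aᵀ (toEuclideanLin P v)) := by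
    rw [← conjTranspose_eq_transpose_of_trivial, toEuclideanLin_conjTranspose_eq_adjoint,
      LinearMap.adjoint_inner_right]
  rw [hadj]
  simp [toLpLin_apply, mulVec_mulVec, inner_add_right, add_comm]

theorem Matrix.hasDerivAt_inner_toEuclideanLin_of_lyapunov
    {A P : Matrix ι ι ℝ} {γ : ℝ} (hLyap : Aᵀ * P + P * A - (2 * γ) • P = -1)
    {x : ℝ → EuclideanSpace ℝ ι} {s : ℝ} (hx : HasDerivAt x (toEuclideanLin A (x s)) s) :
    HasDerivAt (fun u => inner ℝ (x u) (toEuclideanLin P (x u)))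
      (-‖x s‖ ^ 2 + 2 * γ * inner ℝ (x s) (toEuclideanLin P (x s))) s := by
  have hPx : HasDerivAt (fun u => toEuclideanLin P (x u))
      (toEuclideanLin P (toEuclideanLin A (x s))) s :=
    (toEuclideanLin P).toContinuousLinearMap.hasFDerivAt.comp_hasDerivAt s hx
  have hsum : Aᵀ * P + P * A = (2 * γ) • P - 1 := by
    linear_combination (norm := module) hLyap
  refine (hx.inner ℝ hPx).congr_deriv ?_
  rw [inner_toEuclideanLin_mul_add, hsum]
  simp only [map_sub, map_smul, toLpLin_one, LinearMap.sub_apply, LinearMap.smul_apply,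
    LinearMap.id_coe, id_eq, inner_sub_right, inner_smul_right, inner_self_eq_norm_sq_to_K,
    Real.ringHom_apply]
  ring

end

theorem le_exp_mul_sub_mul_of_deriv_right_le_mul {f f' : ℝ → ℝ} {K a b : ℝ}
    (hf : ContinuousOn f (Icc a b))
    (hf' : ∀ x ∈ Ico a b, HasDerivWithinAt f (f' x) (Ici x) x)
    (bound : ∀ x ∈ Ico a b, f' x ≤ K * f x) :
    ∀ x ∈ Icc a b, f x ≤ Real.exp (K * (x - a)) * f a := by
  intro x hx
  have := le_gronwallBound_of_liminf_deriv_right_le hf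
    (fun x hx _ hr => (hf' x hx).liminf_right_slope_le hr) le_rfl
    (fun y hy => (bound y hy).trans_eq (add_zero _).symm) x hx
  rwa [gronwallBound_ε0, mul_comm] at this

/-- Integrated Lyapunov decay: `x(t)ᵀPx(t) ≤ e^{γ̃(t−t₀)} x(t₀)ᵀPx(t₀)` with
`γ̃ = −1/λ_max(P) + 2γ`, for any solution of `ẋ = Ax`. -/
theorem stmt_8 (n : ℕ) (A P : Matrix (Fin n) (Fin n) ℝ) (γ : ℝ) (hP : P.PosDef)
    (hLyap : Aᵀ * P + P * A - (2 * γ) • P = -(1 : Matrix (Fin n) (Fin n) ℝ))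
    (x : ℝ → EuclideanSpace ℝ (Fin n))
    (hx : ∀ t, HasDerivAt x (Matrix.toEuclideanLin A (x t)) t)
    (t₀ t : ℝ) (ht : t₀ ≤ t) :
    (inner ℝ (x t) (Matrix.toEuclideanLin P (x t)) : ℝ) ≤
      Real.exp ((-1 / (⨆ i, hP.1.eigenvalues i) + 2 * γ) * (t - t₀)) *
        (inner ℝ (x t₀) (Matrix.toEuclideanLin P (x t₀)) : ℝ) := by
  set V := fun s => inner ℝ (x s) (Matrix.toEuclideanLin P (x s))
  have hV (s : ℝ) := hasDerivAt_inner_toEuclideanLin_of_lyapunov hLyap (hx s)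
  have hdecay (s : ℝ) :
      -‖x s‖ ^ 2 + 2 * γ * V s ≤ (-1 / (⨆ i, hP.1.eigenvalues i) + 2 * γ) * V s := by
    have := hP.inner_toEuclideanLin_self_div_le (x s)
    rw [add_mul, neg_div, neg_mul, one_div_mul_eq_div]
    linarith
  exact le_exp_mul_sub_mul_of_deriv_right_le_mul
    (fun s _ => (hV s).continuousAt.continuousWithinAt) (fun s _ => (hV s).hasDerivWithinAt)
    (fun s _ => hdecay s) t ⟨ht, le_rfl⟩
end
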